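/- Let F be a finite simple graph, k ≥ 1, u = (u₁, …, u_k) a k-tuple of vertices of F, A = {u₁, …, u_k}, and let C₁, …, C_K be the CCEs of F induced by A. Assume that every vertex of F outside A is incident to at least one edge. Let G be a finite simple graph and v = (v₁, …, v_k) a k-tuple of vertices of G satisfying: for all i, j ∈ [k], u_i = u_j implies v_i = v_j. Then the number of graph homomorphisms h : F → G with h(u_j) = v_j for all j ∈ [k] equals the product over i ∈ [K] of the number of graph homomorphisms from the edge-induced subgraph of C_i to G that send every anchored vertex u_j of C_i to v_j. -/

import Mathlib

/-- One step of the CCE relation: two edges of `F` share an endpoint outside `A`. -/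
def cceStep {V : Type*} (F : SimpleGraph V) (A : Set V)
    (e e' : F.edgeSet) : Prop :=
  ∃ x : V, x ∉ A ∧ x ∈ (e : Sym2 V) ∧ x ∈ (e' : Sym2 V)

/-- The CCE equivalence relation on the edge set of `F` induced by the vertex set `A`. -/
def cceSetoid {V : Type*} (F : SimpleGraph V) (A : Set V) : Setoid F.edgeSet :=
  Relation.EqvGen.setoid (cceStep F A)

/-- The CCEs (connected components of edges) of `F` induced by `A`. -/
def cceClasses {V : Type*} (F : SimpleGraph V) (A : Set V) : Set (Set F.edgeSet) :=
  Setoid.classes (cceSetoid F A)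

/-- The vertex set of the edge-induced subgraph of a set `C` of edges of `F`:
all endpoints of edges in `C`. -/
def cceVerts {V : Type*} (F : SimpleGraph V) (C : Set F.edgeSet) : Set V :=
  {x : V | ∃ e ∈ C, x ∈ (e : Sym2 V)}

/-- The edge-induced subgraph of a set `C` of edges of `F`, as a simple graph whose
vertex type is the set of endpoints of edges in `C`. -/
def cceGraph {V : Type*} (F : SimpleGraph V) (C : Set F.edgeSet) :
    SimpleGraph (cceVerts F C) where
  Adj x y := s((x : V), (y : V)) ∈ Subtype.val '' C
  symm := by
    constructor
    intro x y h
    rwa [Sym2.eq_swap] at h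
  loopless := by
    constructor
    intro x h
    obtain ⟨e, _, he⟩ := h
    exact F.not_isDiag_of_mem_edgeSet e.2 (by rw [he]; exact Sym2.mk_isDiag_iff.2 rfl)

/-- Restriction of a graph homomorphism `h : F →g G` to the edge-induced subgraph
of a set `C` of edges of `F`. -/
def restrictHom {V W : Type*} {F : SimpleGraph V} {G : SimpleGraph W}
    (h : F →g G) (C : Set F.edgeSet) : cceGraph F C →g G where
  toFun x := h x.1
  map_rel' := by
    intro a b hab
    obtain ⟨e, _, he⟩ := hab
    have hadj : F.Adj a.1 b.1 := F.mem_edgeSet.1 (by rw [← he]; exact e.2)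
    exact h.map_rel hadj

/-!
A homomorphism `F →g G` is nothing but a map on vertices sending every edge to an edge, and
every edge lies in exactly one CCE. Two CCEs can only share vertices of `A`, where all the
candidate homomorphisms are pinned to the prescribed values `v`; every other vertex lies in
exactly one CCE, since it is incident to some edge. So an anchored homomorphism is the same as
an independent choice of an anchored homomorphism on each CCE, and the count factors.
-/

section

open Function

variable {V W ι : Type*} {F : SimpleGraph V} {G : SimpleGraph W}

theorem cceClasses_eq_of_mem_cceVerts {A : Set V} {C C' : Set F.edgeSet}
    (hC : C ∈ cceClasses F A) (hC' : C' ∈ cceClasses F A) {x : V} (hx : x ∉ A)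
    (hxC : x ∈ cceVerts F C) (hxC' : x ∈ cceVerts F C') : C = C' := by
  obtain ⟨e, he, hxe⟩ := hxC
  obtain ⟨e', he', hxe'⟩ := hxC'
  have hstep : (cceSetoid F A).r e' e := Relation.EqvGen.rel _ _ ⟨x, hx, hxe', hxe⟩
  obtain ⟨a, rfl⟩ := hC
  exact Setoid.eq_of_mem_classes ⟨a, rfl⟩ ((cceSetoid F A).trans hstep he) hC' he'

theorem exists_mem_cceVerts {A : Set V} {C : ι → Set F.edgeSet}
    (hCcover : ∀ e : F.edgeSet, ∃ i, e ∈ C i)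
    (hIncident : ∀ x : V, x ∉ A → ∃ e : F.edgeSet, x ∈ (e : Sym2 V))
    {x : V} (hx : x ∉ A) : ∃ i, x ∈ cceVerts F (C i) := by
  obtain ⟨e, hxe⟩ := hIncident x hx
  obtain ⟨i, hei⟩ := hCcover e
  exact ⟨i, e, hei, hxe⟩

section Anchored

variable {k : ℕ} {u : Fin k → V} {v : Fin k → W} {C : ι → Set F.edgeSet}

abbrev AnchoredHom (F : SimpleGraph V) (G : SimpleGraph W) (u : Fin k → V) (v : Fin k → W) :=
  {h : F →g G // ∀ j, h (u j) = v j}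

abbrev AnchoredCCEHom (F : SimpleGraph V) (G : SimpleGraph W) (u : Fin k → V) (v : Fin k → W)
    (C : Set F.edgeSet) :=
  {g : cceGraph F C →g G // ∀ (j : Fin k) (hj : u j ∈ cceVerts F C), g ⟨u j, hj⟩ = v j}

def restrictAnchored (C : ι → Set F.edgeSet) (h : AnchoredHom F G u v) (i : ι) :
    AnchoredCCEHom F G u v (C i) :=
  ⟨restrictHom h.1 (C i), fun j _ => h.2 j⟩

theorem restrictAnchored_injective
    (hmem : ∀ x ∉ Set.range u, ∃ i, x ∈ cceVerts F (C i)) :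
    Injective (restrictAnchored (G := G) (u := u) (v := v) C) := by
  intro h h' hhh
  ext x
  by_cases hx : x ∈ Set.range u
  · obtain ⟨j, rfl⟩ := hx
    exact (h.2 j).trans (h'.2 j).symm
  · obtain ⟨i, hxi⟩ := hmem x hx
    exact DFunLike.congr_fun (congrArg Subtype.val (congrFun hhh i)) ⟨x, hxi⟩

theorem exists_glued_map (hC : ∀ i, C i ∈ cceClasses F (Set.range u)) (hCinj : Injective C)
    (hmem : ∀ x ∉ Set.range u, ∃ i, x ∈ cceVerts F (C i))
    (hcompat : ∀ i j, u i = u j → v i = v j) (g : ∀ i, AnchoredCCEHom F G u v (C i)) :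
    ∃ f : V → W, (∀ j, f (u j) = v j) ∧
      ∀ i x (hx : x ∈ cceVerts F (C i)), f x = (g i).1 ⟨x, hx⟩ := by
  have hpoint : ∀ x : V, ∃ w : W, (∀ j, u j = x → w = v j) ∧
      ∀ i (hx : x ∈ cceVerts F (C i)), w = (g i).1 ⟨x, hx⟩ := by
    intro x
    by_cases hx : x ∈ Set.range u
    · obtain ⟨j₀, rfl⟩ := hx
      exact ⟨v j₀, fun j hj => hcompat j₀ j hj.symm, fun i hx => ((g i).2 j₀ hx).symm⟩
    · obtain ⟨i₀, hx₀⟩ := hmem x hx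
      refine ⟨(g i₀).1 ⟨x, hx₀⟩, fun j hj => absurd ⟨j, hj⟩ hx, fun i hxi => ?_⟩
      obtain rfl : i₀ = i :=
        hCinj (cceClasses_eq_of_mem_cceVerts (hC i₀) (hC i) hx hx₀ hxi)
      rfl
  choose f hf using hpoint
  exact ⟨f, fun j => (hf (u j)).1 j rfl, fun i x hx => (hf x).2 i hx⟩

theorem restrictAnchored_surjective (hC : ∀ i, C i ∈ cceClasses F (Set.range u))
    (hCinj : Injective C) (hCcover : ∀ e : F.edgeSet, ∃ i, e ∈ C i)
    (hmem : ∀ x ∉ Set.range u, ∃ i, x ∈ cceVerts F (C i))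
    (hcompat : ∀ i j, u i = u j → v i = v j) :
    Surjective (restrictAnchored (G := G) (u := u) (v := v) C) := by
  intro g
  obtain ⟨f, hfu, hfg⟩ := exists_glued_map hC hCinj hmem hcompat g
  have hmap : ∀ {a b : V}, F.Adj a b → G.Adj (f a) (f b) := by
    intro a b hab
    let e : F.edgeSet := ⟨s(a, b), hab⟩
    obtain ⟨i, hei⟩ := hCcover e
    rw [hfg i a ⟨e, hei, Sym2.mem_mk_left a b⟩, hfg i b ⟨e, hei, Sym2.mem_mk_right a b⟩]
    exact (g i).1.map_rel ⟨e, hei, rfl⟩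
  refine ⟨⟨⟨f, hmap⟩, hfu⟩, funext fun i => Subtype.ext ?_⟩
  ext x
  exact hfg i x.1 x.2

end Anchored

end

theorem stmt2_general {V W : Type*} (F : SimpleGraph V) (k K : ℕ)
    (u : Fin k → V) (C : Fin K → Set F.edgeSet)
    (hC : ∀ i, C i ∈ cceClasses F (Set.range u))
    (hCinj : Function.Injective C)
    (hCcover : ∀ e : F.edgeSet, ∃ i, e ∈ C i)
    (hIncident : ∀ x : V, x ∉ Set.range u → ∃ e : F.edgeSet, x ∈ (e : Sym2 V))
    (G : SimpleGraph W) (v : Fin k → W)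
    (hcompat : ∀ i j, u i = u j → v i = v j) :
    Nat.card {h : F →g G // ∀ j, h.1 (u j) = v j} =
      ∏ i : Fin K,
        Nat.card {g : cceGraph F (C i) →g G //
          ∀ (j : Fin k) (hj : u j ∈ cceVerts F (C i)), g.1 ⟨u j, hj⟩ = v j} := by
  have hmem : ∀ x ∉ Set.range u, ∃ i, x ∈ cceVerts F (C i) :=
    fun _ hx => exists_mem_cceVerts hCcover hIncident hx
  have hbij : Function.Bijective (restrictAnchored (G := G) (u := u) (v := v) C) :=
    ⟨restrictAnchored_injective hmem,
      restrictAnchored_surjective hC hCinj hCcover hmem hcompat⟩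
  exact (Nat.card_congr (Equiv.ofBijective _ hbij)).trans Nat.card_pi

theorem stmt2 {V W : Type*} [Fintype V] [Fintype W] (F : SimpleGraph V) (k K : ℕ)
    (hk : 1 ≤ k) (u : Fin k → V) (C : Fin K → Set F.edgeSet)
    (hC : ∀ i, C i ∈ cceClasses F (Set.range u))
    (hCinj : Function.Injective C)
    (hCcover : ∀ e : F.edgeSet, ∃ i, e ∈ C i)
    (hIncident : ∀ x : V, x ∉ Set.range u → ∃ e : F.edgeSet, x ∈ (e : Sym2 V))
    (G : SimpleGraph W) (v : Fin k → W)
    (hcompat : ∀ i j, u i = u j → v i = v j) :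
    Nat.card {h : F →g G // ∀ j, h.1 (u j) = v j} =
      ∏ i : Fin K,
        Nat.card {g : cceGraph F (C i) →g G //
          ∀ (j : Fin k) (hj : u j ∈ cceVerts F (C i)), g.1 ⟨u j, hj⟩ = v j} :=
  stmt2_general F k K u C hC hCinj hCcover hIncident G v hcompat
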